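/- arXiv:1412.5476 — 3 statements merged into one kernel-verified Lean document; each statement's English description precedes it below -/
import Mathlib

section
/- Let d ≥ 2 and let G ≤ Aut(T_d) be a countable weakly branch group. Then the action of G on the boundary (∂T_d, μ) with the uniform Bernoulli measure μ is totally non-free: for every measurable set B ⊆ ∂T_d there exists a set A in the σ-algebra generated by the sets Fix(g) = {x : g•x = x}, g ∈ G, with μ(A Δ B) = 0. -/
open MeasureTheory
open scoped symmDiff ENNReal Pointwise

/-- Vertices of the `d`-regular rooted tree: finite words over the alphabet `Fin d`. -/
abbrev Word (d : ℕ) := List (Fin d)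

/-- A permutation of the vertex set is a tree automorphism if it preserves word length and the
prefix relation. -/
def IsTreeAut {d : ℕ} (g : Equiv.Perm (Word d)) : Prop :=
  (∀ v : Word d, (g v).length = v.length) ∧
  ∀ v w : Word d, v <+: w ↔ g v <+: g w

/-- The boundary of the `d`-regular rooted tree: infinite sequences over `Fin d`. -/
abbrev Boundary (d : ℕ) := ℕ → Fin d

/-- The length-`n` prefix of a boundary point, as a word. -/
def prefixWord {d : ℕ} (x : Boundary d) (n : ℕ) : Word d := List.ofFn fun i : Fin n => x i

/-- `act` realizes the boundary action of the tree automorphisms in `G`: for `g ∈ G`, the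
length-`n` prefix of `act g x` is `g` applied to the length-`n` prefix of `x`, for every `n`. -/
def IsBoundaryAction {d : ℕ} (G : Subgroup (Equiv.Perm (Word d)))
    (act : Equiv.Perm (Word d) → Boundary d → Boundary d) : Prop :=
  ∀ g ∈ G, ∀ (x : Boundary d) (n : ℕ), prefixWord (act g x) n = g (prefixWord x n)

/-- The cylinder of all boundary points having the word `v` as a prefix. -/
def cylinder {d : ℕ} (v : Word d) : Set (Boundary d) :=
  {x : Boundary d | prefixWord x v.length = v}

/-- The uniform Bernoulli measure: every cylinder on a word of length `n` has measure `d⁻ⁿ`. -/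
def IsUniformBernoulli {d : ℕ} (μ : Measure (Boundary d)) : Prop :=
  ∀ v : Word d, μ (cylinder v) = ((d : ℝ≥0∞)⁻¹) ^ v.length

/-- `G` acts transitively on the words of each fixed length. -/
def LevelTransitive {d : ℕ} (G : Subgroup (Equiv.Perm (Word d))) : Prop :=
  ∀ v w : Word d, v.length = w.length → ∃ g ∈ G, g v = w

/-- The rigid stabilizer of the word `v`: elements of `G` fixing every word that does not have
`v` as a prefix. -/
def ristSet {d : ℕ} (G : Subgroup (Equiv.Perm (Word d))) (v : Word d) :
    Set (Equiv.Perm (Word d)) :=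
  {g : Equiv.Perm (Word d) | g ∈ G ∧ ∀ w : Word d, ¬ v <+: w → g w = w}

/-- `G` is weakly branch: level transitive with all rigid stabilizers nontrivial. -/
def IsWeaklyBranch {d : ℕ} (G : Subgroup (Equiv.Perm (Word d))) : Prop :=
  LevelTransitive G ∧ ∀ v : Word d, ∃ g ∈ ristSet G v, g ≠ 1

/-- The rigid stabilizer of level `k`: the subgroup generated by the rigid stabilizers of all
words of length `k`. -/
def ristLevel {d : ℕ} (G : Subgroup (Equiv.Perm (Word d))) (k : ℕ) :
    Subgroup (Equiv.Perm (Word d)) :=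
  Subgroup.closure (⋃ v ∈ {v : Word d | v.length = k}, ristSet G v)

/-- `G` is branch: level transitive with all level rigid stabilizers of finite index in `G`. -/
def IsBranch {d : ℕ} (G : Subgroup (Equiv.Perm (Word d))) : Prop :=
  LevelTransitive G ∧ ∀ k : ℕ, (ristLevel G k).relIndex G ≠ 0

/-- The fixed-point set of `g` on the boundary, relative to the boundary action `act`. -/
def fixedSet {d : ℕ} (act : Equiv.Perm (Word d) → Boundary d → Boundary d)
    (g : Equiv.Perm (Word d)) : Set (Boundary d) :=
  {x : Boundary d | act g x = x}

/-- The support of `g` on the boundary: points moved by `g`. -/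
def suppSet {d : ℕ} (act : Equiv.Perm (Word d) → Boundary d → Boundary d)
    (g : Equiv.Perm (Word d)) : Set (Boundary d) :=
  {x : Boundary d | act g x ≠ x}

/-!
An element of the rigid stabilizer of `v` moves only boundary points of the cylinder of `v`.
Conversely, given a point `x` of that cylinder, a nontrivial element of the rigid stabilizer of
`v` moves some word below `v`, and conjugating it by an element of `G` carrying the prefix of `x`
of the same length onto that word (level transitivity) gives an element of the rigid stabilizer
of `v` moving `x`. So every cylinder is the union of the supports of the elements of a rigid
stabilizer, a countable union of complements of fixed-point sets. Cylinders generate the product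
σ-algebra, so every measurable set `B` lies in the σ-algebra generated by fixed-point sets, and
`A = B` works.
-/

section

variable {d : ℕ}

@[simp]
lemma prefixWord_length (x : Boundary d) (n : ℕ) : (prefixWord x n).length = n := by
  simp [prefixWord]

lemma prefixWord_prefix (x : Boundary d) {k n : ℕ} (h : k ≤ n) :
    prefixWord x k <+: prefixWord x n := by
  refine List.prefix_iff_eq_take.mpr (List.ext_getElem ?_ fun i _ _ => ?_)
  · simp [h]
  · simp [prefixWord]

lemma eq_of_forall_prefixWord_eq {x y : Boundary d}
    (h : ∀ n, prefixWord x n = prefixWord y n) : x = y :=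
  funext fun i => congrFun (List.ofFn_injective (h (i + 1))) ⟨i, i.lt_succ_self⟩

lemma mem_cylinder_iff_prefix {x : Boundary d} {v : Word d} {n : ℕ} (h : v.length ≤ n) :
    x ∈ cylinder v ↔ v <+: prefixWord x n := by
  refine ⟨fun hx => hx ▸ prefixWord_prefix x h, fun hv => ?_⟩
  have hxv : prefixWord x v.length <+: v :=
    List.prefix_of_prefix_length_le (prefixWord_prefix x h) hv (by simp)
  exact hxv.eq_of_length (by simp)

lemma IsTreeAut.apply_eq_self_of_prefix {g : Equiv.Perm (Word d)} (hg : IsTreeAut g)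
    {v w : Word d} (hvw : v <+: w) (hvgw : v <+: g w) : g v = v := by
  have hgv : g v <+: g w := (hg.2 v w).mp hvw
  exact ((List.prefix_of_prefix_length_le hvgw hgv (hg.1 v).ge).eq_of_length (hg.1 v).symm).symm

lemma IsTreeAut.inv_mul_mul_mem_ristSet {G : Subgroup (Equiv.Perm (Word d))}
    {f h : Equiv.Perm (Word d)} (hf : IsTreeAut f) (hfG : f ∈ G) {v : Word d}
    (hh : h ∈ ristSet G v) : f⁻¹ * h * f ∈ ristSet G (f⁻¹ v) := by
  refine ⟨mul_mem (mul_mem (inv_mem hfG) hh.1) hfG, fun w hw => ?_⟩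
  have hvfw : ¬ v <+: f w := by
    rwa [hf.2 (f⁻¹ v) w, Equiv.Perm.coe_inv, Equiv.apply_symm_apply] at hw
  simp [hh.2 _ hvfw]

lemma exists_prefix_apply_ne_of_mem_ristSet {G : Subgroup (Equiv.Perm (Word d))}
    {v : Word d} {h : Equiv.Perm (Word d)} (hh : h ∈ ristSet G v) (hne : h ≠ 1) :
    ∃ u, v <+: u ∧ h u ≠ u := by
  obtain ⟨u, hu⟩ : ∃ u, h u ≠ u := by
    by_contra! hc
    exact hne (Equiv.ext hc)
  exact ⟨u, by_contra fun hvu => hu (hh.2 u hvu), hu⟩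

section BoundaryAction

variable {G : Subgroup (Equiv.Perm (Word d))} (hG : ∀ g ∈ G, IsTreeAut g)
  {act : Equiv.Perm (Word d) → Boundary d → Boundary d} (hact : IsBoundaryAction G act)
include hG hact

lemma act_eq_self_of_mem_ristSet_of_not_mem_cylinder {g : Equiv.Perm (Word d)} {v : Word d}
    (hg : g ∈ ristSet G v) {x : Boundary d} (hx : x ∉ cylinder v) : act g x = x := by
  refine eq_of_forall_prefixWord_eq fun n => ?_
  have hfix : g (prefixWord x (max n v.length)) = prefixWord x (max n v.length) :=
    hg.2 _ fun hv => hx ((mem_cylinder_iff_prefix (le_max_right _ _)).mpr hv)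
  have hpre := prefixWord_prefix x (le_max_left n v.length)
  rw [hact g hg.1, (hG g hg.1).apply_eq_self_of_prefix hpre (by rwa [hfix])]

lemma exists_mem_ristSet_act_ne (hWB : IsWeaklyBranch G) {v : Word d} {x : Boundary d}
    (hx : x ∈ cylinder v) : ∃ g ∈ ristSet G v, act g x ≠ x := by
  obtain ⟨h, hh, hne⟩ := hWB.2 v
  obtain ⟨u₀, hvu₀, hu₀⟩ := exists_prefix_apply_ne_of_mem_ristSet hh hne
  set u := prefixWord x u₀.length
  have hvu : v <+: u := (mem_cylinder_iff_prefix hvu₀.length_le).mp hx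
  obtain ⟨f, hfG, hfu⟩ := hWB.1 u u₀ (by simp [u])
  have hfv : f⁻¹ v = v := by
    rw [Equiv.Perm.inv_eq_iff_eq]
    exact ((hG f hfG).apply_eq_self_of_prefix hvu (hfu ▸ hvu₀)).symm
  have hg := (hG f hfG).inv_mul_mul_mem_ristSet hfG hh
  rw [hfv] at hg
  refine ⟨f⁻¹ * h * f, hg, fun hfix => hu₀ ?_⟩
  have hgu : (f⁻¹ * h * f) u = u := by rw [← hact _ hg.1, hfix]
  simpa [hfu] using congrArg f hgu

lemma cylinder_eq_iUnion_suppSet (hWB : IsWeaklyBranch G) (v : Word d) :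
    cylinder v = ⋃ g ∈ ristSet G v, suppSet act g := by
  ext x
  simp only [Set.mem_iUnion, exists_prop, suppSet, Set.mem_ofPred_eq]
  exact ⟨exists_mem_ristSet_act_ne hG hact hWB, fun ⟨g, hg, hgx⟩ => by_contra fun hx =>
    hgx (act_eq_self_of_mem_ristSet_of_not_mem_cylinder hG hact hg hx)⟩

end BoundaryAction

lemma setOf_apply_eq_eq_iUnion_cylinder (n : ℕ) (a : Fin d) :
    {x : Boundary d | x n = a} =
      ⋃ w ∈ {w : Fin (n + 1) → Fin d | w (Fin.last n) = a}, _root_.cylinder (List.ofFn w) := by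
  ext x
  simp only [Set.mem_iUnion, exists_prop, Set.mem_ofPred_eq, _root_.cylinder, List.length_ofFn]
  refine ⟨fun hx => ⟨fun i => x i, hx, rfl⟩, fun ⟨w, hw, hx⟩ => ?_⟩
  exact hw ▸ congrFun (List.ofFn_injective hx) (Fin.last n)

lemma pi_le_of_measurableSet_cylinder {m : MeasurableSpace (Boundary d)}
    (h : ∀ v : Word d, MeasurableSet[m] (cylinder v)) : MeasurableSpace.pi ≤ m := by
  have hcoord (n : ℕ) : Measurable[m] fun x : Boundary d => x n :=
    measurable_to_countable' fun a => by
      change MeasurableSet[m] {x | x n = a}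
      rw [setOf_apply_eq_eq_iUnion_cylinder]
      exact MeasurableSet.biUnion (Set.to_countable _) fun w _ => h _
  exact fun s hs => (measurable_pi_iff.mpr hcoord : @Measurable _ _ m MeasurableSpace.pi id) hs

abbrev fixedSetSigma (G : Subgroup (Equiv.Perm (Word d)))
    (act : Equiv.Perm (Word d) → Boundary d → Boundary d) : MeasurableSpace (Boundary d) :=
  MeasurableSpace.generateFrom {s : Set (Boundary d) | ∃ g ∈ G, s = fixedSet act g}

lemma measurableSet_suppSet_fixedSetSigma {G : Subgroup (Equiv.Perm (Word d))}
    {act : Equiv.Perm (Word d) → Boundary d → Boundary d} {g : Equiv.Perm (Word d)}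
    (hg : g ∈ G) : MeasurableSet[fixedSetSigma G act] (suppSet act g) :=
  (MeasurableSpace.measurableSet_generateFrom
    (show fixedSet act g ∈ {s | ∃ g ∈ G, s = fixedSet act g} from ⟨g, hg, rfl⟩)).compl

lemma pi_le_fixedSetSigma {G : Subgroup (Equiv.Perm (Word d))} (hG : ∀ g ∈ G, IsTreeAut g)
    (hGc : Countable G) (hWB : IsWeaklyBranch G)
    {act : Equiv.Perm (Word d) → Boundary d → Boundary d} (hact : IsBoundaryAction G act) :
    MeasurableSpace.pi ≤ fixedSetSigma G act := by
  refine pi_le_of_measurableSet_cylinder fun v => ?_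
  rw [cylinder_eq_iUnion_suppSet hG hact hWB v]
  have hcount : (ristSet G v).Countable :=
    (Set.countable_coe_iff.mp hGc).mono fun _ hg => hg.1
  exact MeasurableSet.biUnion hcount fun g hg => measurableSet_suppSet_fixedSetSigma hg.1

end

theorem weaklyBranch_totallyNonFree_general
    {d : ℕ} (G : Subgroup (Equiv.Perm (Word d)))
    (hG : ∀ g ∈ G, IsTreeAut g) (hGc : Countable G) (hWB : IsWeaklyBranch G)
    (act : Equiv.Perm (Word d) → Boundary d → Boundary d) (hact : IsBoundaryAction G act)
    (μ : Measure (Boundary d)) :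
    ∀ B : Set (Boundary d), MeasurableSet B →
      ∃ A : Set (Boundary d),
        MeasurableSet[MeasurableSpace.generateFrom
          {s : Set (Boundary d) | ∃ g ∈ G, s = fixedSet act g}] A ∧
        μ (A ∆ B) = 0 :=
  fun B hB => ⟨B, pi_le_fixedSetSigma hG hGc hWB hact B hB, by simp⟩

/-- Every countable weakly branch group acts totally non-freely on the boundary of the tree
with the uniform Bernoulli measure. -/
theorem weaklyBranch_totallyNonFree
    {d : ℕ} (hd : 2 ≤ d) (G : Subgroup (Equiv.Perm (Word d)))
    (hG : ∀ g ∈ G, IsTreeAut g) (hGc : Countable G) (hWB : IsWeaklyBranch G)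
    (act : Equiv.Perm (Word d) → Boundary d → Boundary d) (hact : IsBoundaryAction G act)
    (μ : Measure (Boundary d)) [IsProbabilityMeasure μ] (hμ : IsUniformBernoulli μ) :
    ∀ B : Set (Boundary d), MeasurableSet B →
      ∃ A : Set (Boundary d),
        MeasurableSet[MeasurableSpace.generateFrom
          {s : Set (Boundary d) | ∃ g ∈ G, s = fixedSet act g}] A ∧
        μ (A ∆ B) = 0 :=
  weaklyBranch_totallyNonFree_general G hG hGc hWB act hact μ
end

section
/- Let d ≥ 2 and let G ≤ Aut(T_d) be a countable branch group. Then G admits infinitely many pairwise distinct indecomposable characters; that is, the set of indecomposable characters of G is infinite. -/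
open MeasureTheory
open scoped symmDiff ENNReal Pointwise

open scoped ComplexOrder

/-- A character of a group `G`: a normalized, central, positive-definite function `G → ℂ`. -/
def IsCharacter (G : Type*) [Group G] (χ : G → ℂ) : Prop :=
  (∀ g h : G, χ (g * h) = χ (h * g)) ∧
  (∀ (k : ℕ) (g : Fin k → G),
      (Matrix.of fun i j : Fin k => χ (g i * (g j)⁻¹)).PosSemidef) ∧
  χ 1 = 1

/-- A character is indecomposable if it is not a proper convex combination of two distinct
characters. -/
def IsIndecomposableCharacter (G : Type*) [Group G] (χ : G → ℂ) : Prop :=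
  IsCharacter G χ ∧
  ¬ ∃ (t : ℝ) (χ₁ χ₂ : G → ℂ), 0 < t ∧ t < 1 ∧
      IsCharacter G χ₁ ∧ IsCharacter G χ₂ ∧ χ₁ ≠ χ₂ ∧
      ∀ g : G, χ g = (t : ℂ) * χ₁ g + ((1 : ℂ) - (t : ℂ)) * χ₂ g

/-!
The characters of a group form a compact convex subset of `G → ℂ`. Since the regular character
`δ₁` lies in it, Krein–Milman shows that the extreme characters separate every `g ≠ 1` from `1`;
and extreme characters of a quotient `G ⧸ N` pull back to indecomposable characters of `G`, because
`1` is an extreme point of the unit disc. If an infinite residually finite group had only finitely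
many indecomposable characters, those trivial on some finite-index subgroup would all be trivial on
one finite-index subgroup `M ≠ 1`; but for `1 ≠ g ∈ M`, some finite quotient in which `g`
survives carries an extreme character not trivial on `g`. A branch group is infinite by level
transitivity, and residually finite because `rist_G(k)` has finite index and fixes level `k`.
-/

theorem Matrix.isClosed_setOf_posSemidef {n 𝕜 : Type*} [Fintype n] [RCLike 𝕜] :
    IsClosed {M : Matrix n n 𝕜 | M.PosSemidef} := by
  simp only [Matrix.posSemidef_iff_dotProduct_mulVec, Set.ofPred_and, Set.ofPred_forall]
  refine .inter (isClosed_eq continuous_id.matrix_conjTranspose continuous_id)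
    (isClosed_iInter fun x => isClosed_le continuous_const ?_)
  exact continuous_const.dotProduct (continuous_id.matrix_mulVec continuous_const)

section Characters

variable {G H : Type*} [Group G] [Group H] {χ φ₁ φ₂ : G → ℂ} {ψ : H → ℂ}

namespace IsCharacter

theorem map_inv (hχ : IsCharacter G χ) (x : G) : χ x⁻¹ = star (χ x) := by
  simpa [Matrix.conjTranspose_apply] using
    (congrFun (congrFun (hχ.2.1 2 ![x, 1]).1 1) 0).symm

theorem norm_le_one (hχ : IsCharacter G χ) (x : G) : ‖χ x‖ ≤ 1 := by
  have hdet := (hχ.2.1 2 ![x, 1]).det_nonneg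
  simp only [Matrix.det_fin_two, Matrix.of_apply] at hdet
  simp only [Matrix.cons_val_zero, Matrix.cons_val_one, Matrix.cons_val_fin_one, inv_one,
    mul_one, one_mul, mul_inv_cancel, hχ.2.2, hχ.map_inv, RCLike.star_def, Complex.mul_conj,
    Complex.normSq_eq_norm_sq, sub_nonneg] at hdet
  exact (sq_le_one_iff₀ (norm_nonneg _)).mp (mod_cast hdet)

theorem mul_right_of_eq_one (hχ : IsCharacter G χ) {n : G} (hn : χ n = 1) (x : G) :
    χ (x * n) = χ x := by
  set β := χ x - χ (x * n)
  have hquad := (hχ.2.1 3 ![x, 1, n⁻¹]).dotProduct_mulVec_nonneg ![-β, 1, -1]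
  have hval : star ![-β, 1, -1] ⬝ᵥ
      ((Matrix.of fun i j : Fin 3 => χ (![x, 1, n⁻¹] i * (![x, 1, n⁻¹] j)⁻¹)).mulVec ![-β, 1, -1])
      = -(Complex.normSq β : ℂ) := by
    have hinv : χ n⁻¹ = 1 := by rw [hχ.map_inv, hn, star_one]
    have hxn : χ (n⁻¹ * x⁻¹) = star (χ (x * n)) := by rw [← mul_inv_rev, hχ.map_inv]
    simp only [dotProduct, Matrix.mulVec, Fin.sum_univ_three, Matrix.of_apply, Pi.star_apply,
      Matrix.cons_val_zero, Matrix.cons_val_one, Matrix.cons_val_two, Matrix.head_cons,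
      Matrix.tail_cons, inv_one, mul_one, one_mul, inv_inv, mul_inv_cancel, inv_mul_cancel,
      hχ.2.2, hn, hinv, hxn, hχ.map_inv, ← Complex.mul_conj, β, RCLike.star_def,
      map_sub, map_neg, map_one]
    ring
  rw [hval, neg_nonneg, ← Complex.ofReal_zero, Complex.real_le_real] at hquad
  exact (sub_eq_zero.mp (Complex.normSq_eq_zero.mp (hquad.antisymm (Complex.normSq_nonneg β)))).symm

theorem comp (hψ : IsCharacter H ψ) (f : G →* H) : IsCharacter G (ψ ∘ f) :=
  ⟨fun g h => by simpa using hψ.1 (f g) (f h), fun k g => by simpa using hψ.2.1 k (f ∘ g),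
    by simpa using hψ.2.2⟩

theorem of_comp {f : G →* H} (hf : Function.Surjective f) (hψ : IsCharacter G (ψ ∘ f)) :
    IsCharacter H ψ := by
  refine ⟨fun g h => ?_, fun k g => ?_, by simpa using hψ.2.2⟩
  · obtain ⟨g, rfl⟩ := hf g
    obtain ⟨h, rfl⟩ := hf h
    simpa using hψ.1 g h
  · simpa [Function.surjInv_eq hf] using hψ.2.1 k (Function.surjInv hf ∘ g)

theorem exists_comp_eq (hχ : IsCharacter G χ) {f : G →* H} (hf : Function.Surjective f)
    (hker : ∀ n ∈ f.ker, χ n = 1) : ∃ ψ : H → ℂ, IsCharacter H ψ ∧ ψ ∘ f = χ := by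
  have hcomp : χ ∘ Function.surjInv hf ∘ f = χ := by
    funext x
    have hx : (Function.surjInv hf (f x))⁻¹ * x ∈ f.ker := by
      simp [MonoidHom.mem_ker, Function.surjInv_eq hf]
    simpa using (hχ.mul_right_of_eq_one (hker _ hx) (Function.surjInv hf (f x))).symm
  exact ⟨χ ∘ Function.surjInv hf, of_comp hf (by rw [Function.comp_assoc, hcomp]; exact hχ), hcomp⟩

theorem eq_one_of_mem_openSegment (hφ₁ : IsCharacter G φ₁) (hφ₂ : IsCharacter G φ₂) {x : G}
    (h : (1 : ℂ) ∈ openSegment ℝ (φ₁ x) (φ₂ x)) : φ₁ x = 1 ∧ φ₂ x = 1 := by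
  have hext : (1 : ℂ) ∈ (Metric.closedBall (0 : ℂ) 1).extremePoints ℝ :=
    StrictConvexSpace.sphere_subset_extremePoints_closedBall 0 one_ne_zero (by simp)
  exact (mem_extremePoints.mp hext).2 _ (by simpa using hφ₁.norm_le_one x) _
    (by simpa using hφ₂.norm_le_one x) h

end IsCharacter

theorem isCharacter_ite_eq_one [DecidableEq G] :
    IsCharacter G (fun x => if x = 1 then 1 else 0) := by
  refine ⟨fun g h => by simp only [mul_eq_one_comm], fun k g => ?_, by simp⟩
  let A : Matrix (Set.range g) (Fin k) ℂ := Matrix.of fun q i => if g i = q then 1 else 0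
  convert A.posSemidef_conjTranspose_mul_self
  ext i j
  rw [Matrix.mul_apply, Finset.sum_eq_single ⟨g i, i, rfl⟩]
  · by_cases h : g i = g j
    · simp [A, mul_inv_eq_one, h]
    · simp [A, mul_inv_eq_one, h, Ne.symm h]
  · rintro ⟨_, l, rfl⟩ _ hl
    simp [A, Ne.symm (Subtype.coe_ne_coe.mpr hl)]
  · simp

theorem convex_setOf_isCharacter : Convex ℝ {χ : G → ℂ | IsCharacter G χ} := by
  rintro χ₁ h₁ χ₂ h₂ a b ha hb hab
  refine ⟨fun g h => by simp [h₁.1 g h, h₂.1 g h], fun k g => ?_, by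
    simp [h₁.2.2, h₂.2.2, ← Complex.ofReal_add, hab]⟩
  convert ((h₁.2.1 k g).smul ha).add ((h₂.2.1 k g).smul hb) using 1
  ext i j
  simp

theorem isClosed_setOf_isCharacter : IsClosed {χ : G → ℂ | IsCharacter G χ} := by
  simp only [IsCharacter, Set.ofPred_and, Set.ofPred_forall]
  refine .inter (isClosed_iInter fun g => isClosed_iInter fun h =>
    isClosed_eq (continuous_apply _) (continuous_apply _)) (.inter (isClosed_iInter fun k =>
      isClosed_iInter fun g => Matrix.isClosed_setOf_posSemidef.preimage ?_)
    (isClosed_eq (continuous_apply _) continuous_const))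
  exact continuous_pi fun i => continuous_pi fun j => continuous_apply _

theorem isCompact_setOf_isCharacter : IsCompact {χ : G → ℂ | IsCharacter G χ} :=
  (isCompact_univ_pi fun _ => isCompact_closedBall (0 : ℂ) 1).of_isClosed_subset
    isClosed_setOf_isCharacter fun χ hχ x _ => by simpa using hχ.norm_le_one x

theorem exists_mem_extremePoints_ne_one {g : G} (hg : g ≠ 1) :
    ∃ χ ∈ {χ : G → ℂ | IsCharacter G χ}.extremePoints ℝ, χ g ≠ 1 := by
  classical
  by_contra! h
  have hsub : {χ : G → ℂ | IsCharacter G χ} ⊆ {χ | χ g = 1} := by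
    rw [← closure_convexHull_extremePoints isCompact_setOf_isCharacter convex_setOf_isCharacter]
    exact closure_minimal (convexHull_min h ((convex_singleton 1).linear_preimage
      (LinearMap.proj (R := ℝ) g))) (isClosed_eq (continuous_apply g) continuous_const)
  simpa [hg] using @hsub (fun x => if x = 1 then 1 else 0) isCharacter_ite_eq_one

theorem comp_mem_extremePoints_setOf_isCharacter {f : G →* H} (hf : Function.Surjective f)
    (hψ : ψ ∈ {ψ : H → ℂ | IsCharacter H ψ}.extremePoints ℝ) :
    ψ ∘ f ∈ {χ : G → ℂ | IsCharacter G χ}.extremePoints ℝ := by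
  refine mem_extremePoints_iff_left.mpr ⟨hψ.1.comp f, fun φ₁ h₁ φ₂ h₂ hseg => ?_⟩
  obtain ⟨a, b, ha, hb, hab, hcomb⟩ := hseg
  have hker (n : G) (hn : n ∈ f.ker) : φ₁ n = 1 ∧ φ₂ n = 1 :=
    IsCharacter.eq_one_of_mem_openSegment h₁ h₂
      ⟨a, b, ha, hb, hab, by simpa [(MonoidHom.mem_ker).mp hn, hψ.1.2.2] using congrFun hcomb n⟩
  obtain ⟨ψ₁, hψ₁, rfl⟩ := IsCharacter.exists_comp_eq h₁ hf fun n hn => (hker n hn).1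
  obtain ⟨ψ₂, hψ₂, rfl⟩ := IsCharacter.exists_comp_eq h₂ hf fun n hn => (hker n hn).2
  have hseg : ψ ∈ openSegment ℝ ψ₁ ψ₂ := by
    refine ⟨a, b, ha, hb, hab, funext fun y => ?_⟩
    obtain ⟨x, rfl⟩ := hf y
    simpa using congrFun hcomb x
  rw [(mem_extremePoints_iff_left.mp hψ).2 ψ₁ hψ₁ ψ₂ hψ₂ hseg]

theorem IsIndecomposableCharacter.of_mem_extremePoints
    (hχ : χ ∈ {χ : G → ℂ | IsCharacter G χ}.extremePoints ℝ) : IsIndecomposableCharacter G χ := by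
  refine ⟨hχ.1, fun ⟨t, χ₁, χ₂, ht₀, ht₁, h₁, h₂, hne, hcomb⟩ => hne ?_⟩
  have hseg : χ ∈ openSegment ℝ χ₁ χ₂ :=
    ⟨t, 1 - t, ht₀, sub_pos.mpr ht₁, add_sub_cancel t 1, funext fun g => by
      simp [hcomb g, Complex.real_smul]⟩
  obtain ⟨rfl, rfl⟩ := (mem_extremePoints.mp hχ).2 χ₁ h₁ χ₂ h₂ hseg
  rfl

theorem exists_isIndecomposableCharacter_ne_one (N : Subgroup G) [N.Normal] {g : G}
    (hg : g ∉ N) : ∃ χ : G → ℂ, IsIndecomposableCharacter G χ ∧ (∀ n ∈ N, χ n = 1) ∧ χ g ≠ 1 := by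
  obtain ⟨ψ, hψ, hψg⟩ := exists_mem_extremePoints_ne_one (G := G ⧸ N)
    (mt (QuotientGroup.eq_one_iff g).mp hg)
  refine ⟨ψ ∘ QuotientGroup.mk' N, .of_mem_extremePoints
    (comp_mem_extremePoints_setOf_isCharacter (QuotientGroup.mk'_surjective N) hψ),
    fun n hn => ?_, hψg⟩
  simpa [(QuotientGroup.eq_one_iff n).mpr hn] using hψ.1.2.2

theorem setOf_isIndecomposableCharacter_infinite [Infinite G] [Group.ResiduallyFinite G] :
    {χ : G → ℂ | IsIndecomposableCharacter G χ}.Infinite := by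
  intro hfin
  set F := {χ : G → ℂ | IsIndecomposableCharacter G χ ∧
    ∃ K : Subgroup G, K.FiniteIndex ∧ ∀ n ∈ K, χ n = 1}
  have : Finite F := (hfin.subset fun _ hχ => hχ.1).to_subtype
  choose K hK hKχ using fun χ : F => χ.2.2
  have : (⨅ χ : F, K χ).FiniteIndex := Subgroup.finiteIndex_iInf hK
  obtain ⟨g, hgK, hg⟩ : ∃ g ∈ ⨅ χ : F, K χ, g ≠ 1 := by
    refine (Subgroup.bot_or_exists_ne_one _).resolve_left fun hbot => ?_
    have := Subgroup.FiniteIndex.index_ne_zero (H := ⨅ χ : F, K χ)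
    rw [hbot, Subgroup.index_bot, Nat.card_eq_zero_of_infinite] at this
    exact this rfl
  obtain ⟨N, hgN⟩ := Group.exists_finiteIndexNormalSubgroup_notMem g hg
  obtain ⟨χ, hχ, hχN, hχg⟩ := exists_isIndecomposableCharacter_ne_one N.toSubgroup hgN
  exact hχg (hKχ ⟨χ, hχ, N, inferInstance, hχN⟩ g (Subgroup.mem_iInf.mp hgK _))

end Characters

section Tree

variable {d : ℕ} {G : Subgroup (Equiv.Perm (Word d))}

theorem apply_eq_self_of_mem_ristSet (hG : ∀ g ∈ G, IsTreeAut g) {p : Equiv.Perm (Word d)}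
    {v u : Word d} (hp : p ∈ ristSet G v) (hu : u.length = v.length) : p u = u := by
  by_cases huv : u = v
  · subst huv
    by_contra hne
    have hnot : ¬ u <+: p u := fun h => hne (h.eq_of_length ((hG p hp.1).1 u).symm).symm
    exact hne (p.injective (hp.2 (p u) hnot))
  · exact hp.2 u fun h => huv (h.eq_of_length hu.symm).symm

theorem apply_eq_self_of_mem_ristLevel (hG : ∀ g ∈ G, IsTreeAut g) {k : ℕ}
    {p : Equiv.Perm (Word d)} (hp : p ∈ ristLevel G k) {u : Word d} (hu : u.length = k) :
    p u = u := by
  suffices ristLevel G k ≤ MulAction.stabilizer (Equiv.Perm (Word d)) u from this hp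
  refine (Subgroup.closure_le _).mpr fun q hq => ?_
  simp only [Set.mem_iUnion, Set.mem_ofPred_eq] at hq
  obtain ⟨v, hv, hqv⟩ := hq
  exact apply_eq_self_of_mem_ristSet hG hqv (hu.trans hv.symm)

theorem LevelTransitive.infinite (hd : 2 ≤ d) (hG : ∀ g ∈ G, IsTreeAut g)
    (hT : LevelTransitive G) : Infinite G := by
  rw [← not_finite_iff_infinite]
  intro
  have hcard (n : ℕ) : d ^ n ≤ Nat.card G := by
    let w₀ : Word d := List.replicate n ⟨0, by omega⟩
    let orbit (g : G) : List.Vector (Fin d) n := ⟨g.1 w₀, by simp [(hG g.1 g.2).1, w₀]⟩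
    have hsurj : Function.Surjective orbit := fun w => by
      obtain ⟨g, hg, hgw⟩ := hT w₀ w.1 (by simp [w₀])
      exact ⟨⟨g, hg⟩, Subtype.ext hgw⟩
    simpa [Nat.card_eq_fintype_card, card_vector] using Nat.card_le_card_of_surjective _ hsurj
  exact (Nat.lt_pow_self hd).not_ge (hcard _)

theorem IsBranch.residuallyFinite (hG : ∀ g ∈ G, IsTreeAut g) (hB : IsBranch G) :
    Group.ResiduallyFinite G := by
  refine Group.residuallyFinite_iff_exists_finiteIndex.mpr fun g hg => ?_
  obtain ⟨w, hw⟩ : ∃ w, g.1 w ≠ w := by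
    by_contra! h
    exact hg (Subtype.ext (Equiv.ext h))
  exact ⟨(ristLevel G w.length).subgroupOf G, ⟨hB.2 w.length⟩, fun hmem =>
    hw (apply_eq_self_of_mem_ristLevel hG (Subgroup.mem_subgroupOf.mp hmem) rfl)⟩

end Tree

theorem branch_infinitely_many_indecomposable_characters_general
    {d : ℕ} (hd : 2 ≤ d) (G : Subgroup (Equiv.Perm (Word d)))
    (hG : ∀ g ∈ G, IsTreeAut g) (hB : IsBranch G) :
    {χ : G → ℂ | IsIndecomposableCharacter G χ}.Infinite := by
  have := hB.1.infinite hd hG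
  have := hB.residuallyFinite hG
  exact setOf_isIndecomposableCharacter_infinite

/-- Every countable branch group on the `d`-regular rooted tree admits infinitely many pairwise
distinct indecomposable characters. -/
theorem branch_infinitely_many_indecomposable_characters
    {d : ℕ} (hd : 2 ≤ d) (G : Subgroup (Equiv.Perm (Word d)))
    (hG : ∀ g ∈ G, IsTreeAut g) (hGc : Countable G) (hB : IsBranch G) :
    {χ : G → ℂ | IsIndecomposableCharacter G χ}.Infinite :=
  branch_infinitely_many_indecomposable_characters_general hd G hG hB
end

section
/- There exist a countable weakly branch group G ≤ Aut(T_2) (acting on the binary rooted tree) and an n ∈ ℕ such that the diagonal action of G on (X^n, μ^n), where X = ∂T_2 and μ is the uniform Bernoulli measure, has no ergodic component of positive measure; that is, there is no measurable set Y ⊆ X^n with μ^n(Y) > 0 that is invariant under the diagonal action of G and such that every measurable Z ⊆ Y invariant under the diagonal action satisfies μ^n(Z) = 0 or μ^n(Y \ Z) = 0. -/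
open MeasureTheory
open scoped symmDiff ENNReal Pointwise

/-- The diagonal action of a tree automorphism on `Xⁿ`. -/
def diagAct {d : ℕ} (act : Equiv.Perm (Word d) → Boundary d → Boundary d)
    (n : ℕ) (g : Equiv.Perm (Word d)) : (Fin n → Boundary d) → (Fin n → Boundary d) :=
  fun x i => act g (x i)

/-!
Let `G` be generated by the flips of the two children of a single vertex of even depth and by
the flips of all children at a single odd depth. The first kind makes every rigid stabiliser
nontrivial, and both together make `G` level transitive. But every element of `G` acts on each
odd level by one global translation, so for `(x, y) ∈ X²` each difference `y (2i+1) - x (2i+1)`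
is a `G`-invariant. These invariants are independent and uniform, and an ergodic component must
lie a.e. in one level set of each of them: it has measure at most `2⁻ᵏ` for every `k`.
-/

section TreeAutomorphisms

variable {d : ℕ}

lemma IsTreeAut.of_take {g : Equiv.Perm (Word d)} (hlen : ∀ v, (g v).length = v.length)
    (htake : ∀ (w : Word d) (n : ℕ), g (w.take n) = (g w).take n) : IsTreeAut g :=
  ⟨hlen, fun v w => by
    rw [List.prefix_iff_eq_take, List.prefix_iff_eq_take, hlen, ← htake, g.injective.eq_iff]⟩

variable (d) in
def treeAutSubgroup : Subgroup (Equiv.Perm (Word d)) where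
  carrier := {g | IsTreeAut g}
  mul_mem' {g h} hg hh :=
    ⟨fun v => by rw [Equiv.Perm.mul_apply, hg.1, hh.1], fun v w => (hh.2 v w).trans (hg.2 _ _)⟩
  one_mem' := ⟨fun _ => rfl, fun _ _ => Iff.rfl⟩
  inv_mem' {g} hg :=
    ⟨fun v => by simpa using (hg.1 (g⁻¹ v)).symm,
     fun v w => by simpa using (hg.2 (g⁻¹ v) (g⁻¹ w)).symm⟩

def IsLevelShift (g : Equiv.Perm (Word d)) (m : ℕ) (e : Fin d) : Prop :=
  ∀ p : Word d, p.length = m → ∀ s, g (p ++ [s]) = g p ++ [s + e]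

variable (d) in
def levelShiftSubgroup [NeZero d] (m : ℕ) : Subgroup (Equiv.Perm (Word d)) where
  carrier := {g | (∀ v, (g v).length = v.length) ∧ ∃ e, IsLevelShift g m e}
  mul_mem' {g h} := by
    rintro ⟨hglen, eg, hg⟩ ⟨hhlen, eh, hh⟩
    refine ⟨fun v => by rw [Equiv.Perm.mul_apply, hglen, hhlen], eh + eg, fun p hp s => ?_⟩
    rw [Equiv.Perm.mul_apply, Equiv.Perm.mul_apply, hh p hp, hg _ (by rw [hhlen, hp]), add_assoc]
  one_mem' := ⟨fun _ => rfl, 0, fun p _ s => by simp⟩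
  inv_mem' {g} := by
    rintro ⟨hlen, e, hg⟩
    have hinvlen (v : Word d) : (g⁻¹ v).length = v.length := by
      simpa using (hlen (g⁻¹ v)).symm
    refine ⟨hinvlen, -e, fun p hp s => g.injective ?_⟩
    rw [hg _ (by rw [hinvlen, hp])]
    simp

lemma IsBoundaryAction.apply_eq_add {G : Subgroup (Equiv.Perm (Word d))}
    {act : Equiv.Perm (Word d) → Boundary d → Boundary d} (hact : IsBoundaryAction G act)
    {g : Equiv.Perm (Word d)} (hg : g ∈ G) {m : ℕ} {e : Fin d} (hshift : IsLevelShift g m e)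
    (x : Boundary d) : act g x m = x m + e := by
  have prefixWord_succ (y : Boundary d) : prefixWord y (m + 1) = prefixWord y m ++ [y m] := by
    simp only [prefixWord, List.ofFn_succ_last]
    rfl
  have h := hact g hg x (m + 1)
  rw [prefixWord_succ, prefixWord_succ, hshift _ (by simp [prefixWord]), ← hact g hg x m] at h
  simpa using h

lemma levelTransitive_of_children {G : Subgroup (Equiv.Perm (Word d))}
    (hG : G ≤ treeAutSubgroup d)
    (hchildren : ∀ (v : Word d) (s t : Fin d), ∃ g ∈ G, g (v ++ [s]) = v ++ [t]) :
    LevelTransitive G := by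
  intro v w hvw
  induction v using List.reverseRecOn generalizing w with
  | nil => exact ⟨1, G.one_mem, (List.eq_nil_of_length_eq_zero hvw.symm).symm⟩
  | append_singleton v s ih =>
    obtain ⟨w, t, rfl⟩ : ∃ w' t, w = w' ++ [t] := by
      rcases List.eq_nil_or_concat w with rfl | ⟨w', t, rfl⟩
      · simp at hvw
      · exact ⟨w', t, List.concat_eq_append⟩
    obtain ⟨g, hgG, hgv⟩ := ih w (by simpa using hvw)
    obtain ⟨r, hr⟩ : ∃ r, g (v ++ [s]) = w ++ [r] := by
      obtain ⟨u, hu⟩ := ((hG hgG).2 v (v ++ [s])).1 (List.prefix_append _ _)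
      have hlen := congrArg List.length hu
      rw [(hG hgG).1, List.length_append, (hG hgG).1] at hlen
      obtain ⟨r, rfl⟩ := List.length_eq_one_iff.1 (by simpa using hlen)
      exact ⟨r, by rw [← hu, hgv]⟩
    obtain ⟨h, hhG, hh⟩ := hchildren w r t
    exact ⟨h * g, G.mul_mem hhG hgG, by rw [Equiv.Perm.mul_apply, hr, hh]⟩

end TreeAutomorphisms

section LevelPerm

variable {d : ℕ}

lemma List.modify_append_of_lt {α : Type*} (f : α → α) {l₁ : List α} {i : ℕ}
    (h : i < l₁.length) (l₂ : List α) :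
    (l₁ ++ l₂).modify i f = l₁.modify i f ++ l₂ := by
  apply List.ext_getElem (by simp)
  intro j h₁ h₂
  simp only [List.getElem_modify, List.getElem_append]
  split_ifs <;> grind

lemma List.take_modify_self {α : Type*} (f : α → α) (i : ℕ) (l : List α) :
    (l.modify i f).take i = l.take i := by
  rw [List.take_modify, List.modify_eq_self (by simp)]

open Classical in
noncomputable def levelPerm (m : ℕ) (S : Set (Word d)) (σ : Equiv.Perm (Fin d)) :
    Equiv.Perm (Word d) where
  toFun w := if w.take m ∈ S then w.modify m σ else w
  invFun w := if w.take m ∈ S then w.modify m σ.symm else w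
  left_inv w := by
    by_cases hw : w.take m ∈ S <;> simp [hw, List.take_modify_self, List.modify_modify_eq]
  right_inv w := by
    by_cases hw : w.take m ∈ S <;> simp [hw, List.take_modify_self, List.modify_modify_eq]

variable {m : ℕ} {S : Set (Word d)} {σ : Equiv.Perm (Fin d)}

open Classical in
lemma levelPerm_apply (w : Word d) :
    levelPerm m S σ w = if w.take m ∈ S then w.modify m σ else w := rfl

lemma levelPerm_of_length_le {w : Word d} (hw : w.length ≤ m) : levelPerm m S σ w = w := by
  rw [levelPerm_apply, List.modify_eq_self hw, ite_self]

lemma levelPerm_of_take_notMem {w : Word d} (hw : w.take m ∉ S) : levelPerm m S σ w = w := by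
  rw [levelPerm_apply, if_neg hw]

lemma length_levelPerm (w : Word d) : (levelPerm m S σ w).length = w.length := by
  rw [levelPerm_apply]; split_ifs <;> simp

lemma levelPerm_take (w : Word d) (n : ℕ) :
    levelPerm m S σ (w.take n) = (levelPerm m S σ w).take n := by
  rcases le_or_gt n m with hnm | hmn
  · rw [levelPerm_of_length_le (by simp; omega), levelPerm_apply]
    split_ifs <;> simp [List.take_modify, List.modify_eq_self, hnm]
  · rw [levelPerm_apply, levelPerm_apply, List.take_take, min_eq_left hmn.le]
    split_ifs <;> simp [List.take_modify]

lemma isTreeAut_levelPerm : IsTreeAut (levelPerm m S σ) :=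
  .of_take length_levelPerm levelPerm_take

open Classical in
lemma levelPerm_append_singleton {p : Word d} (hp : p.length = m) (s : Fin d) :
    levelPerm m S σ (p ++ [s]) = p ++ [if p ∈ S then σ s else s] := by
  subst hp
  rw [levelPerm_apply, List.take_left]
  split_ifs
  · rw [List.modify_eq_take_cons_drop (by simp)]
    simp
  · rfl

lemma levelPerm_singleton_of_not_prefix {u w : Word d} (h : ¬ u <+: w) :
    levelPerm u.length {u} σ w = w :=
  levelPerm_of_take_notMem fun hw => h (hw ▸ List.take_prefix _ _)

lemma isLevelShift_levelPerm_of_ne [NeZero d] {n : ℕ} (hmn : n ≠ m) :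
    IsLevelShift (levelPerm m S σ) n 0 := by
  intro p hp s
  rw [add_zero]
  rcases lt_or_gt_of_ne hmn with hlt | hgt
  · rw [levelPerm_of_length_le (by simp; omega), levelPerm_of_length_le (by omega)]
  · rw [levelPerm_apply, levelPerm_apply, List.take_append_of_le_length (by omega)]
    split_ifs <;> simp [List.modify_append_of_lt _ (show m < p.length by omega)]

lemma isLevelShift_levelPerm_univ [NeZero d] (e : Fin d) :
    IsLevelShift (levelPerm m Set.univ (Equiv.addRight e)) m e := by
  intro p hp s
  rw [levelPerm_append_singleton hp, levelPerm_of_length_le hp.le, if_pos (Set.mem_univ p),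
    Equiv.coe_addRight]

end LevelPerm

lemma Subgroup.countable_closure {G : Type*} [Group G] {s : Set G} (hs : s.Countable) :
    Countable (Subgroup.closure s) := by
  have := hs.to_subtype
  rw [FreeGroup.closure_eq_range]
  exact Set.countable_range _ |>.to_subtype

section FlipGroup

noncomputable abbrev flipBelow (m : ℕ) (S : Set (Word 2)) : Equiv.Perm (Word 2) :=
  levelPerm m S (Equiv.addRight 1)

def flipGroup : Subgroup (Equiv.Perm (Word 2)) :=
  Subgroup.closure ({g | ∃ v : Word 2, Even v.length ∧ g = flipBelow v.length {v}} ∪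
    {g | ∃ m, Odd m ∧ g = flipBelow m Set.univ})

lemma flipBelow_mem_flipGroup_of_even {v : Word 2} (hv : Even v.length) :
    flipBelow v.length {v} ∈ flipGroup :=
  Subgroup.subset_closure (.inl ⟨v, hv, rfl⟩)

lemma flipBelow_mem_flipGroup_of_odd {m : ℕ} (hm : Odd m) : flipBelow m Set.univ ∈ flipGroup :=
  Subgroup.subset_closure (.inr ⟨m, hm, rfl⟩)

lemma flipGroup_le_treeAutSubgroup : flipGroup ≤ treeAutSubgroup 2 := by
  rw [flipGroup, Subgroup.closure_le]
  rintro _ (⟨v, -, rfl⟩ | ⟨m, -, rfl⟩) <;> exact isTreeAut_levelPerm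

lemma flipGroup_le_levelShiftSubgroup {m : ℕ} (hm : Odd m) :
    flipGroup ≤ levelShiftSubgroup 2 m := by
  rw [flipGroup, Subgroup.closure_le]
  rintro _ (⟨v, hv, rfl⟩ | ⟨n, -, rfl⟩)
  · refine ⟨length_levelPerm, 0, isLevelShift_levelPerm_of_ne ?_⟩
    rintro rfl
    exact Nat.not_even_iff_odd.2 hm hv
  · refine ⟨length_levelPerm, ?_⟩
    rcases eq_or_ne m n with rfl | hmn
    · exact ⟨1, isLevelShift_levelPerm_univ 1⟩
    · exact ⟨0, isLevelShift_levelPerm_of_ne hmn⟩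

lemma countable_flipGroup : Countable flipGroup := by
  refine Subgroup.countable_closure (.union ?_ ?_)
  · exact (Set.countable_range fun v : Word 2 => flipBelow v.length {v}).mono
      fun _ ⟨v, _, hg⟩ => Set.mem_range.2 ⟨v, hg.symm⟩
  · exact (Set.countable_range fun m => flipBelow m Set.univ).mono
      fun _ ⟨m, _, hg⟩ => Set.mem_range.2 ⟨m, hg.symm⟩

lemma exists_mem_flipGroup_flip_child (v : Word 2) (s : Fin 2) :
    ∃ g ∈ flipGroup, g (v ++ [s]) = v ++ [s + 1] := by
  rcases Nat.even_or_odd v.length with hv | hv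
  · exact ⟨_, flipBelow_mem_flipGroup_of_even hv,
      by rw [levelPerm_append_singleton rfl, if_pos (Set.mem_singleton v), Equiv.coe_addRight]⟩
  · exact ⟨_, flipBelow_mem_flipGroup_of_odd hv,
      by rw [levelPerm_append_singleton rfl, if_pos (Set.mem_univ v), Equiv.coe_addRight]⟩

lemma levelTransitive_flipGroup : LevelTransitive flipGroup := by
  refine levelTransitive_of_children flipGroup_le_treeAutSubgroup fun v s t => ?_
  obtain rfl | rfl : t = s ∨ t = s + 1 := by revert s t; decide
  · exact ⟨1, flipGroup.one_mem, rfl⟩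
  · exact exists_mem_flipGroup_flip_child v s

lemma exists_ne_one_mem_ristSet_flipGroup (v : Word 2) :
    ∃ g ∈ ristSet flipGroup v, g ≠ 1 := by
  set u := v ++ List.replicate (v.length % 2) 0
  have hu : Even u.length := by simp [u, Nat.even_iff]; omega
  refine ⟨_, ⟨flipBelow_mem_flipGroup_of_even hu, fun w hw => ?_⟩, fun h => ?_⟩
  · exact levelPerm_singleton_of_not_prefix fun huw => hw ((List.prefix_append _ _).trans huw)
  · have := congrArg (· (u ++ [0])) h
    simp [levelPerm_append_singleton] at this

lemma isWeaklyBranch_flipGroup : IsWeaklyBranch flipGroup :=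
  ⟨levelTransitive_flipGroup, exists_ne_one_mem_ristSet_flipGroup⟩

end FlipGroup

section BernoulliMeasure

variable {d : ℕ} {μ : Measure (Boundary d)}

lemma measure_setOf_prefix_mem_le (hμ : IsUniformBernoulli μ) {N : ℕ}
    (S : Finset (Fin N → Fin d)) :
    μ {x | (fun j : Fin N => x j) ∈ S} ≤ S.card * (d : ℝ≥0∞)⁻¹ ^ N := by
  calc μ {x | (fun j : Fin N => x j) ∈ S}
      ≤ μ (⋃ q ∈ S, _root_.cylinder (List.ofFn q)) := by
        refine measure_mono fun x hx => Set.mem_biUnion hx ?_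
        simp [_root_.cylinder, prefixWord]
    _ ≤ ∑ q ∈ S, μ (_root_.cylinder (List.ofFn q)) := measure_biUnion_finset_le _ _
    _ = S.card * (d : ℝ≥0∞)⁻¹ ^ N := by
      rw [Finset.sum_congr rfl fun q _ => by rw [hμ, List.length_ofFn]]
      simp

lemma measure_setOf_odd_letters_le [NeZero d] (hμ : IsUniformBernoulli μ) {k : ℕ}
    (a : Fin k → Fin d) :
    μ {x | ∀ i : Fin k, x (2 * i + 1) = a i} ≤ (d : ℝ≥0∞)⁻¹ ^ k := by
  classical
  let interleave (b : Fin k → Fin d) (j : Fin (2 * k)) : Fin d :=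
    if j.val % 2 = 0 then b ⟨j / 2, by omega⟩ else a ⟨j / 2, by omega⟩
  calc μ {x | ∀ i : Fin k, x (2 * i + 1) = a i}
      ≤ μ {x | (fun j : Fin (2 * k) => x j) ∈ Finset.univ.image interleave} := by
        refine measure_mono fun x hx =>
          Finset.mem_image.2 ⟨fun i => x (2 * i), Finset.mem_univ _, ?_⟩
        funext j
        simp only [interleave]
        split_ifs with hj
        · congr 1; omega
        · rw [← hx]; congr 1; simp; omega
    _ ≤ (d : ℝ≥0∞) ^ k * (d : ℝ≥0∞)⁻¹ ^ (2 * k) := by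
        grw [measure_setOf_prefix_mem_le hμ, Finset.card_image_le]
        simp
    _ = (d : ℝ≥0∞)⁻¹ ^ k := by
        rw [pow_mul, ← mul_pow, sq, ← mul_assoc,
          ENNReal.mul_inv_cancel (by simp [NeZero.ne d]) (by simp), one_mul]

lemma measure_pi_setOf_odd_letters_sub_le [NeZero d] [IsProbabilityMeasure μ]
    (hμ : IsUniformBernoulli μ) {k : ℕ} (c : Fin k → Fin d) :
    Measure.pi (fun _ : Fin 2 => μ) {p | ∀ i : Fin k, p 1 (2 * i + 1) - p 0 (2 * i + 1) = c i}
      ≤ (d : ℝ≥0∞)⁻¹ ^ k := by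
  set A := {q : Boundary d × Boundary d | ∀ i : Fin k, q.2 (2 * i + 1) - q.1 (2 * i + 1) = c i}
  have hA : MeasurableSet A := by
    simp only [A, Set.ofPred_forall]
    exact MeasurableSet.iInter fun i => measurableSet_eq_fun (by fun_prop) measurable_const
  calc _ = μ.prod μ A := (measurePreserving_finTwoArrow μ).measure_preimage hA.nullMeasurableSet
    _ = ∫⁻ x, μ (Prod.mk x ⁻¹' A) ∂μ := Measure.prod_apply hA
    _ ≤ _ := lintegral_le_const <| .of_forall fun x => by
      simpa only [A, Set.preimage_ofPred_eq, sub_eq_iff_eq_add] using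
        measure_setOf_odd_letters_le hμ fun i => c i + x (2 * i + 1)

end BernoulliMeasure

section ErgodicComponents

variable {d n : ℕ}

def IsErgodicComponent (G : Subgroup (Equiv.Perm (Word d)))
    (act : Equiv.Perm (Word d) → Boundary d → Boundary d) (ν : Measure (Fin n → Boundary d))
    (Y : Set (Fin n → Boundary d)) : Prop :=
  MeasurableSet Y ∧ (∀ g ∈ G, diagAct act n g ⁻¹' Y = Y) ∧
    ∀ Z ⊆ Y, MeasurableSet Z → (∀ g ∈ G, diagAct act n g ⁻¹' Z = Z) →
      ν Z = 0 ∨ ν (Y \ Z) = 0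

lemma IsErgodicComponent.exists_ae_eq_const {G : Subgroup (Equiv.Perm (Word d))}
    {act : Equiv.Perm (Word d) → Boundary d → Boundary d} {ν : Measure (Fin n → Boundary d)}
    {Y : Set (Fin n → Boundary d)} (hY : IsErgodicComponent G act ν Y) (hpos : ν Y ≠ 0)
    {β : Type*} [Countable β] {f : (Fin n → Boundary d) → β}
    (hf : ∀ c, MeasurableSet (f ⁻¹' {c}))
    (hinv : ∀ g ∈ G, ∀ p, f (diagAct act n g p) = f p) :
    ∃ c, ν (Y \ f ⁻¹' {c}) = 0 := by
  obtain ⟨c, hc⟩ : ∃ c, ν (Y ∩ f ⁻¹' {c}) ≠ 0 := by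
    by_contra! h
    refine hpos (measure_mono_null (fun p hp => ?_) (measure_iUnion_null h))
    exact Set.mem_iUnion.2 ⟨f p, hp, rfl⟩
  refine ⟨c, ?_⟩
  have hZ := hY.2.2 (Y ∩ f ⁻¹' {c}) Set.inter_subset_left (hY.1.inter (hf c))
    fun g hg => by rw [Set.preimage_inter, hY.2.1 g hg]; ext p; simp [hinv g hg]
  simpa [Set.sdiff_inter_self_eq_sdiff, hc] using hZ

theorem IsErgodicComponent.measure_eq_zero [NeZero d] (hd : 1 < d)
    {G : Subgroup (Equiv.Perm (Word d))} (hG : ∀ m, Odd m → G ≤ levelShiftSubgroup d m)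
    {act : Equiv.Perm (Word d) → Boundary d → Boundary d} (hact : IsBoundaryAction G act)
    {μ : Measure (Boundary d)} [IsProbabilityMeasure μ] (hμ : IsUniformBernoulli μ)
    {Y : Set (Fin 2 → Boundary d)} (hY : IsErgodicComponent G act (Measure.pi fun _ => μ) Y) :
    Measure.pi (fun _ => μ) Y = 0 := by
  by_contra hpos
  let δ (i : ℕ) (p : Fin 2 → Boundary d) : Fin d := p 1 (2 * i + 1) - p 0 (2 * i + 1)
  have hδ (i : ℕ) : ∃ c, Measure.pi (fun _ => μ) (Y \ δ i ⁻¹' {c}) = 0 := by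
    refine hY.exists_ae_eq_const hpos
      (fun c => measurableSet_eq_fun (by fun_prop) measurable_const) fun g hg p => ?_
    obtain ⟨-, e, he⟩ := hG (2 * i + 1) (odd_two_mul_add_one i) hg
    simp only [δ, diagAct, hact.apply_eq_add hg he, add_sub_add_right_eq_sub]
  choose c hc using hδ
  have hsmall (k : ℕ) : Measure.pi (fun _ => μ) Y ≤ (d : ℝ≥0∞)⁻¹ ^ k :=
    calc Measure.pi (fun _ => μ) Y
        ≤ Measure.pi (fun _ => μ) (⋂ i : Fin k, δ i ⁻¹' {c i}) := by
          refine measure_mono_ae (ae_le_set.2 ?_)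
          rw [Set.sdiff_iInter]
          exact measure_iUnion_null fun i => hc i
      _ ≤ (d : ℝ≥0∞)⁻¹ ^ k := by
          convert measure_pi_setOf_odd_letters_sub_le hμ fun i : Fin k => c i
          ext p
          simp [δ]
  have hd' : (d : ℝ≥0∞)⁻¹ < 1 := ENNReal.inv_lt_one.2 (by exact_mod_cast hd)
  exact hpos (nonpos_iff_eq_zero.1
    (ge_of_tendsto' (ENNReal.tendsto_pow_atTop_nhds_zero_of_lt_one hd') hsmall))

end ErgodicComponents

/-- There is a countable weakly branch group `G` on the binary rooted tree and an `n` such that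
the diagonal action of `G` on `(Xⁿ, μⁿ)` has no ergodic component of positive measure. -/
theorem exists_weaklyBranch_no_positive_ergodic_component :
    ∃ G : Subgroup (Equiv.Perm (Word 2)),
      (∀ g ∈ G, IsTreeAut g) ∧ Countable G ∧ IsWeaklyBranch G ∧
      ∃ n : ℕ,
        ∀ act : Equiv.Perm (Word 2) → Boundary 2 → Boundary 2, IsBoundaryAction G act →
        ∀ μ : Measure (Boundary 2), IsProbabilityMeasure μ → IsUniformBernoulli μ →
          ¬ ∃ Y : Set (Fin n → Boundary 2),
              MeasurableSet Y ∧ 0 < (Measure.pi fun _ : Fin n => μ) Y ∧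
              (∀ g ∈ G, diagAct act n g ⁻¹' Y = Y) ∧
              ∀ Z : Set (Fin n → Boundary 2), Z ⊆ Y → MeasurableSet Z →
                (∀ g ∈ G, diagAct act n g ⁻¹' Z = Z) →
                (Measure.pi fun _ : Fin n => μ) Z = 0 ∨
                (Measure.pi fun _ : Fin n => μ) (Y \ Z) = 0 := by
  refine ⟨flipGroup, fun g hg => flipGroup_le_treeAutSubgroup hg, countable_flipGroup,
    isWeaklyBranch_flipGroup, 2, fun act hact μ _ hμ => ?_⟩
  rintro ⟨Y, hYmeas, hpos, hinv, hmin⟩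
  exact hpos.ne' (IsErgodicComponent.measure_eq_zero one_lt_two
    (fun _ hm => flipGroup_le_levelShiftSubgroup hm) hact hμ ⟨hYmeas, hinv, hmin⟩)
end
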